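/- If h satisfies the Codazzi condition, then for all smooth functions f, g, m : E → ℝ and all x ∈ E: Dm(x)([X_f,X_g](x)) + Df(x)([X_g,X_m](x)) + Dg(x)([X_m,X_f](x)) = 0, where [X,Y](x) = DY(x)(X(x)) − DX(x)(Y(x)) denotes the Lie bracket of vector fields. (Displayed identity (jacobi) in the Remark following Proposition 'hamilton', Section 6.) -/

import Mathlib

/-!
Statement 6 (identity (jacobi) of Section 6): if `h` satisfies the Codazzi
condition relative to the torsionless connection `Γ`, then for all smooth
functions `f, g, m` on `E`:
`Dm([X_f,X_g]) + Df([X_g,X_m]) + Dg([X_m,X_f]) = 0`.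
-/

noncomputable section

variable {E : Type*} [NormedAddCommGroup E] [NormedSpace ℝ E]

/-- The scalar function `x ↦ h(x)(α(x), β(x))`. -/
def hfun (hs : E → (E →L[ℝ] ℝ) →L[ℝ] E) (α β : E → (E →L[ℝ] ℝ)) (x : E) : ℝ :=
  (β x) (hs x (α x))

/-- The hamiltonian-type vector field `X_f(x) = h_#(x)(Df(x))`. -/
def Xf (hs : E → (E →L[ℝ] ℝ) →L[ℝ] E) (f : E → ℝ) (x : E) : E :=
  hs x (fderiv ℝ f x)

/-- The dual covariant derivative of a one-form:
`(∇*_v α)(x)(w) = (Dα(x)(v))(w) − α(x)(Γ(x)(v,w))`. -/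
def dualD (Γ : E → E →L[ℝ] E →L[ℝ] E) (v : E) (α : E → (E →L[ℝ] ℝ)) (x : E) :
    E →L[ℝ] ℝ :=
  fderiv ℝ α x v - (α x).comp (Γ x v)

/-- The covariant derivative `(∇_v h)(α,β)(x)` of `h` in direction `v`. -/
def nablaHG (hs : E → (E →L[ℝ] ℝ) →L[ℝ] E) (Γ : E → E →L[ℝ] E →L[ℝ] E)
    (v : E) (α β : E → (E →L[ℝ] ℝ)) (x : E) : ℝ :=
  fderiv ℝ (hfun hs α β) x v
    - (β x) (hs x (dualD Γ v α x))
    - (dualD Γ v β x) (hs x (α x))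

/-- The Codazzi condition for `h` relative to the connection `Γ`. -/
def CodazziG (hs : E → (E →L[ℝ] ℝ) →L[ℝ] E) (Γ : E → E →L[ℝ] E →L[ℝ] E) : Prop :=
  ∀ α β γ : E → (E →L[ℝ] ℝ), ContDiff ℝ (⊤ : ℕ∞) α → ContDiff ℝ (⊤ : ℕ∞) β →
    ContDiff ℝ (⊤ : ℕ∞) γ → ∀ x : E,
      nablaHG hs Γ (hs x (α x)) β γ x = nablaHG hs Γ (hs x (β x)) α γ x

/-- The Lie bracket of vector fields `[X,Y](x) = DY(x)(X(x)) − DX(x)(Y(x))`. -/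
def lieB (X Y : E → E) (x : E) : E :=
  fderiv ℝ Y x (X x) - fderiv ℝ X x (Y x)

lemma lem1 (hs : E → (E →L[ℝ] ℝ) →L[ℝ] E) (hsm : ContDiff ℝ (⊤ : ℕ∞) hs)
    (α : E → (E →L[ℝ] ℝ)) (hα : ContDiff ℝ (⊤ : ℕ∞) α) (x v : E) :
    fderiv ℝ (fun y => hs y (α y)) x v
      = (fderiv ℝ hs x v) (α x) + hs x (fderiv ℝ α x v) := by
  rw [fderiv_clm_apply (hsm.differentiable (by simp) x)
    (hα.differentiable (by simp) x)]
  simp [add_comm]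

lemma lem2 (hs : E → (E →L[ℝ] ℝ) →L[ℝ] E) (hsm : ContDiff ℝ (⊤ : ℕ∞) hs)
    (α β : E → (E →L[ℝ] ℝ)) (hα : ContDiff ℝ (⊤ : ℕ∞) α) (hβ : ContDiff ℝ (⊤ : ℕ∞) β)
    (x v : E) :
    fderiv ℝ (fun y => β y (hs y (α y))) x v
      = (fderiv ℝ β x v) (hs x (α x)) + β x ((fderiv ℝ hs x v) (α x))
        + β x (hs x (fderiv ℝ α x v)) := by
  have hd : DifferentiableAt ℝ (fun y => hs y (α y)) x :=
    ((hsm.differentiable (by simp) x)).clm_apply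
      ((hα.differentiable (by simp) x))
  rw [fderiv_clm_apply (hβ.differentiable (by simp) x) hd]
  simp [lem1 hs hsm α hα x v]
  ring

/-- Expanded formula for the covariant derivative of `h`. -/
lemma nabla_eq (hs : E → (E →L[ℝ] ℝ) →L[ℝ] E) (hsm : ContDiff ℝ (⊤ : ℕ∞) hs)
    (hsym : ∀ (x : E) (α β : E →L[ℝ] ℝ), β (hs x α) = α (hs x β))
    (Γ : E → E →L[ℝ] E →L[ℝ] E)
    (β γ : E → (E →L[ℝ] ℝ)) (hβ : ContDiff ℝ (⊤ : ℕ∞) β) (hγ : ContDiff ℝ (⊤ : ℕ∞) γ)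
    (v : E) (x : E) :
    nablaHG hs Γ v β γ x
      = γ x ((fderiv ℝ hs x v) (β x)) + β x (Γ x v (hs x (γ x)))
        + γ x (Γ x v (hs x (β x))) := by
  have h1 : fderiv ℝ (hfun hs β γ) x v
      = (fderiv ℝ γ x v) (hs x (β x)) + γ x ((fderiv ℝ hs x v) (β x))
        + γ x (hs x (fderiv ℝ β x v)) := by
    have : hfun hs β γ = fun y => γ y (hs y (β y)) := rfl
    rw [this, lem2 hs hsm β γ hβ hγ x v]
  have h2 : γ x (hs x ((β x).comp (Γ x v))) = β x (Γ x v (hs x (γ x))) := by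
    rw [hsym x ((β x).comp (Γ x v)) (γ x)]; rfl
  simp only [nablaHG, dualD, h1, map_sub, ContinuousLinearMap.sub_apply,
    ContinuousLinearMap.comp_apply, h2]
  ring

theorem stmt6 [FiniteDimensional ℝ E]
    (Γ : E → E →L[ℝ] E →L[ℝ] E) (hΓsm : ContDiff ℝ (⊤ : ℕ∞) Γ)
    (hΓsym : ∀ (x : E) (u v : E), Γ x u v = Γ x v u)
    (hs : E → (E →L[ℝ] ℝ) →L[ℝ] E) (hsm : ContDiff ℝ (⊤ : ℕ∞) hs)
    (hsym : ∀ (x : E) (α β : E →L[ℝ] ℝ), β (hs x α) = α (hs x β))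
    (hcod : CodazziG hs Γ) :
    ∀ f g m : E → ℝ, ContDiff ℝ (⊤ : ℕ∞) f → ContDiff ℝ (⊤ : ℕ∞) g →
      ContDiff ℝ (⊤ : ℕ∞) m → ∀ x : E,
        fderiv ℝ m x (lieB (Xf hs f) (Xf hs g) x)
          + fderiv ℝ f x (lieB (Xf hs g) (Xf hs m) x)
          + fderiv ℝ g x (lieB (Xf hs m) (Xf hs f) x) = 0 := by
  intro f g m hf hg hm x
  set α : E → (E →L[ℝ] ℝ) := fderiv ℝ f with hαdef
  set β : E → (E →L[ℝ] ℝ) := fderiv ℝ g with hβdef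
  set γ : E → (E →L[ℝ] ℝ) := fderiv ℝ m with hγdef
  have hα : ContDiff ℝ (⊤ : ℕ∞) α := hf.fderiv_right (by exact_mod_cast le_top)
  have hβ : ContDiff ℝ (⊤ : ℕ∞) β := hg.fderiv_right (by exact_mod_cast le_top)
  have hγ : ContDiff ℝ (⊤ : ℕ∞) γ := hm.fderiv_right (by exact_mod_cast le_top)
  set a : E := hs x (α x) with hadef
  set b : E := hs x (β x) with hbdef
  set c : E := hs x (γ x) with hcdef
  -- second derivative symmetry
  have symα : ∀ u w : E, fderiv ℝ α x u w = fderiv ℝ α x w u := by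
    intro u w
    exact (hf.contDiffAt.isSymmSndFDerivAt (by
      have : ((2:ℕ∞) : WithTop ℕ∞) ≤ ((⊤:ℕ∞) : WithTop ℕ∞) := WithTop.coe_le_coe.2 le_top
      simpa using this)) u w
  have symβ : ∀ u w : E, fderiv ℝ β x u w = fderiv ℝ β x w u := by
    intro u w
    exact (hg.contDiffAt.isSymmSndFDerivAt (by
      have : ((2:ℕ∞) : WithTop ℕ∞) ≤ ((⊤:ℕ∞) : WithTop ℕ∞) := WithTop.coe_le_coe.2 le_top
      simpa using this)) u w
  have symγ : ∀ u w : E, fderiv ℝ γ x u w = fderiv ℝ γ x w u := by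
    intro u w
    exact (hm.contDiffAt.isSymmSndFDerivAt (by
      have : ((2:ℕ∞) : WithTop ℕ∞) ≤ ((⊤:ℕ∞) : WithTop ℕ∞) := WithTop.coe_le_coe.2 le_top
      simpa using this)) u w
  -- Codazzi applications
  have key1 := hcod α β γ hα hβ hγ x
  have key2 := hcod β γ α hβ hγ hα x
  have key3 := hcod γ α β hγ hα hβ x
  rw [nabla_eq hs hsm hsym Γ β γ hβ hγ a x, nabla_eq hs hsm hsym Γ α γ hα hγ b x] at key1
  rw [nabla_eq hs hsm hsym Γ γ α hγ hα b x, nabla_eq hs hsm hsym Γ β α hβ hα c x] at key2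
  rw [nabla_eq hs hsm hsym Γ α β hα hβ c x, nabla_eq hs hsm hsym Γ γ β hγ hβ a x] at key3
  -- expand the Lie brackets
  have eXf : Xf hs f = fun y => hs y (α y) := rfl
  have eXg : Xf hs g = fun y => hs y (β y) := rfl
  have eXm : Xf hs m = fun y => hs y (γ y) := rfl
  have hXf : ∀ v : E, fderiv ℝ (Xf hs f) x v = (fderiv ℝ hs x v) (α x) + hs x (fderiv ℝ α x v) := by
    intro v; rw [eXf]; exact lem1 hs hsm α hα x v
  have hXg : ∀ v : E, fderiv ℝ (Xf hs g) x v = (fderiv ℝ hs x v) (β x) + hs x (fderiv ℝ β x v) := by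
    intro v; rw [eXg]; exact lem1 hs hsm β hβ x v
  have hXm : ∀ v : E, fderiv ℝ (Xf hs m) x v = (fderiv ℝ hs x v) (γ x) + hs x (fderiv ℝ γ x v) := by
    intro v; rw [eXm]; exact lem1 hs hsm γ hγ x v
  have hXfx : Xf hs f x = a := rfl
  have hXgx : Xf hs g x = b := rfl
  have hXmx : Xf hs m x = c := rfl
  simp only [lieB, hXfx, hXgx, hXmx, map_sub, hXf, hXg, hXm, map_add]
  -- convert γ(hs ξ) to ξ(c) etc.
  have e1 : ∀ ξ : E →L[ℝ] ℝ, γ x (hs x ξ) = ξ c := fun ξ => hsym x ξ (γ x)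
  have e2 : ∀ ξ : E →L[ℝ] ℝ, α x (hs x ξ) = ξ a := fun ξ => hsym x ξ (α x)
  have e3 : ∀ ξ : E →L[ℝ] ℝ, β x (hs x ξ) = ξ b := fun ξ => hsym x ξ (β x)
  simp only [e1, e2, e3]
  linarith [key1, key2, key3, symα b c, symα c b, symβ a c, symβ c a, symγ b a, symγ a b]


end
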